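/- Let (W_t)_{t ≥ 1} be independent, identically distributed, integrable real-valued random variables with E[W_1] = D > 0. Define the CuSum statistic c_0 = 0, c_t = max(c_{t−1} + W_t, 0), and for b > 0 the stopping time T_b = inf{ t ≥ 1 : c_t ≥ b }. Then limsup_{b → ∞} E[T_b] / b ≤ 1 / D. -/

import Mathlib

/-!
Fix `0 < a < D` and cut time into blocks of length `n = ⌈b / a⌉`. The CuSum statistic dominates
the sum of the increments over any block ending at that time, so `T_b > k n` forces each of the
first `k` block sums, which are i.i.d. copies of `S_n`, below `b ≤ a n`. Hence
`P(T_b > k n) ≤ q ^ k` with `q = P(S_n < a n)`, and `E[T_b] ≤ n / (1 - q)`. The law of large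
numbers gives `q → 0` as `b → ∞`, so `limsup E[T_b] / b ≤ 1 / a`; then let `a ↑ D`.
-/

open MeasureTheory ProbabilityTheory Filter Topology
open scoped ENNReal

noncomputable section

namespace QCDStmt

/-- The CuSum recursion `c 0 = 0`, `c (t+1) = max (c t + W t) 0`
(here `W t` is the increment of the `(t+1)`-st observation). -/
def cusumW {Ω : Type*} (W : ℕ → Ω → ℝ) : ℕ → Ω → ℝ
  | 0 => fun _ => 0
  | t + 1 => fun ω => max (cusumW W t ω + W t ω) 0

/-- The CuSum stopping time `T_b = inf {t ≥ 1 : c t ≥ b}` (with `inf ∅ = ∞`). -/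
def cusumWHit {Ω : Type*} (W : ℕ → Ω → ℝ) (b : ℝ) (ω : Ω) : ℕ∞ :=
  sInf {s : ℕ∞ | ∃ t : ℕ, s = (t : ℕ∞) ∧ 1 ≤ t ∧ b ≤ cusumW W t ω}

end QCDStmt

theorem ENat.toENNReal_eq_tsum_indicator (m : ℕ∞) :
    (m : ℝ≥0∞) = ∑' k : ℕ, {k : ℕ | (k : ℕ∞) < m}.indicator 1 k := by
  rw [← tsum_subtype]
  simp only [Pi.one_apply]
  rw [ENNReal.tsum_set_one]
  cases m with
  | top => simp
  | coe n => simp [Set.Nat.encard_range]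

theorem MeasureTheory.lintegral_enat_eq_tsum_measure_lt {α : Type*} [MeasurableSpace α]
    (μ : Measure α) {T : α → ℕ∞} (hT : ∀ k : ℕ, MeasurableSet {x | (k : ℕ∞) < T x}) :
    ∫⁻ x, (T x : ℝ≥0∞) ∂μ = ∑' k : ℕ, μ {x | (k : ℕ∞) < T x} := by
  calc ∫⁻ x, (T x : ℝ≥0∞) ∂μ = ∫⁻ x, ∑' k : ℕ, {x | (k : ℕ∞) < T x}.indicator 1 x ∂μ := by
        simp only [ENat.toENNReal_eq_tsum_indicator, Set.indicator_apply, Set.mem_ofPred_eq,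
          Pi.one_apply]
    _ = ∑' k : ℕ, μ {x | (k : ℕ∞) < T x} := by
        rw [lintegral_tsum fun k => (measurable_one.indicator (hT k)).aemeasurable]
        simp only [lintegral_indicator_one (hT _)]

theorem ENNReal.tsum_le_mul_tsum_mul_of_antitone {g : ℕ → ℝ≥0∞} (hg : Antitone g)
    (n : ℕ) [NeZero n] : ∑' m, g m ≤ n * ∑' k, g (k * n) :=
  calc ∑' m, g m = ∑' p : ℕ × Fin n, g (p.1 * n + p.2) :=
        ((Nat.divModEquiv n).symm.tsum_eq g).symm
    _ ≤ ∑' p : ℕ × Fin n, g (p.1 * n) := ENNReal.tsum_le_tsum fun p => hg (Nat.le_add_right _ _)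
    _ = n * ∑' k, g (k * n) := by
        rw [ENNReal.tsum_prod (f := fun k (_ : Fin n) => g (k * n)), ← ENNReal.tsum_mul_left]
        simp

theorem ProbabilityTheory.iIndepFun.curry {Ω ι κ 𝓧 : Type*} [MeasurableSpace Ω]
    [MeasurableSpace 𝓧] {P : Measure Ω} {X : ι × κ → Ω → 𝓧} (hX : ∀ p, Measurable (X p))
    (h : iIndepFun X P) : iIndepFun (fun i ω j => X (i, j) ω) P := by
  have := h.isProbabilityMeasure
  have _ (p) : IsProbabilityMeasure (P.map (X p)) :=
    Measure.isProbabilityMeasure_map (hX p).aemeasurable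
  have hrow (i : ι) :
      P.map (fun ω j => X (i, j) ω) = Measure.infinitePi fun j => P.map (X (i, j)) :=
    (h.precomp (Prod.mk_right_injective i)).map_fun_eq_infinitePi_map fun j => hX (i, j)
  rw [iIndepFun_iff_map_fun_eq_infinitePi_map fun i => measurable_pi_lambda _ fun j => hX (i, j)]
  simp_rw [hrow]
  rw [← Measure.infinitePi_map_curry (fun i j => P.map (X (i, j))),
    ← h.map_fun_eq_infinitePi_map hX, Measure.map_map (by fun_prop) (measurable_pi_lambda _ hX)]
  rfl

section IID

variable {Ω : Type*} [MeasurableSpace Ω] {P : Measure Ω} {W : ℕ → Ω → ℝ}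

theorem iIndepFun_sum_block (hmeas : ∀ t, Measurable (W t)) (hindep : iIndepFun W P)
    (n : ℕ) [NeZero n] : iIndepFun (fun j ω => ∑ r : Fin n, W (j * n + r) ω) P := by
  have hblocks : iIndepFun (fun j ω (r : Fin n) => W (j * n + r) ω) P :=
    iIndepFun.curry (fun _ => hmeas _) (hindep.precomp (Nat.divModEquiv n).symm.injective)
  exact hblocks.comp (fun _ x => ∑ r, x r) fun _ => Finset.measurable_sum _ fun r _ =>
    measurable_pi_apply r

theorem identDistrib_sum_shift (hindep : iIndepFun W P)
    (hident : ∀ t, IdentDistrib (W t) (W 0) P P) (n o : ℕ) :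
    IdentDistrib (fun ω => ∑ r : Fin n, W (o + r) ω) (fun ω => ∑ r : Fin n, W r ω) P P := by
  have hvec : IdentDistrib (fun ω (r : Fin n) => W (o + r) ω) (fun ω (r : Fin n) => W r ω) P P :=
    IdentDistrib.pi (fun r => (hident _).trans (hident r).symm)
      (hindep.precomp ((add_right_injective o).comp Fin.val_injective))
      (hindep.precomp Fin.val_injective)
  exact hvec.comp (Finset.measurable_sum _ fun r _ => measurable_pi_apply r)

theorem tendsto_measure_sum_lt_mul [IsProbabilityMeasure P] (hmeas : ∀ t, Measurable (W t))
    (hindep : iIndepFun W P) (hident : ∀ t, IdentDistrib (W t) (W 0) P P)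
    (hint : Integrable (W 0) P) {a : ℝ} (ha : a < ∫ ω, W 0 ω ∂P) :
    Tendsto (fun n : ℕ => P {ω | ∑ i ∈ Finset.range n, W i ω < a * n}) atTop (𝓝 0) := by
  have hlln : TendstoInMeasure P (fun n ω => (∑ i ∈ Finset.range n, W i ω) / n) atTop
      (fun _ => ∫ ω, W 0 ω ∂P) :=
    tendstoInMeasure_of_tendsto_ae
      (fun n => ((Finset.measurable_sum _ fun i _ => hmeas i).div_const _).aestronglyMeasurable)
      (strong_law_ae_real W hint (fun i j hij => hindep.indepFun hij) hident)
  refine tendsto_of_tendsto_of_tendsto_of_le_of_le tendsto_const_nhds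
    (tendstoInMeasure_iff_dist.mp hlln _ (sub_pos.mpr ha)) (fun n => zero_le) fun n => ?_
  refine measure_mono fun ω (hω : _ < a * n) => ?_
  have hn : (0 : ℝ) < n := by
    rcases n.eq_zero_or_pos with rfl | hn
    · simp at hω
    · exact_mod_cast hn
  have : (∑ i ∈ Finset.range n, W i ω) / n < a := by rwa [div_lt_iff₀ hn]
  show _ ≤ dist _ _
  rw [Real.dist_eq, abs_sub_comm, abs_of_pos (by linarith)]
  linarith

end IID

namespace QCDStmt

section Cusum

variable {Ω : Type*} {W : ℕ → Ω → ℝ} {b : ℝ} {ω : Ω}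

theorem cusumW_nonneg (t : ℕ) : 0 ≤ cusumW W t ω := by
  cases t with
  | zero => rfl
  | succ t => exact le_max_right _ _

theorem sum_Ico_le_cusumW {s t : ℕ} (h : s ≤ t) : ∑ i ∈ Finset.Ico s t, W i ω ≤ cusumW W t ω := by
  induction t, h using Nat.le_induction with
  | base => simpa using cusumW_nonneg s
  | succ t hst ih =>
    rw [Finset.sum_Ico_succ_top hst]
    exact (add_le_add_left ih _).trans (le_max_left _ _)

theorem lt_cusumWHit_iff {k : ℕ} :
    (k : ℕ∞) < cusumWHit W b ω ↔ ∀ t : ℕ, 1 ≤ t → t ≤ k → cusumW W t ω < b := by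
  rw [← ENat.add_one_le_iff (ENat.natCast_ne_top k), cusumWHit, le_sInf_iff]
  constructor
  · intro h t ht htk
    by_contra! hb
    have := h t ⟨t, rfl, ht, hb⟩
    norm_cast at this
    omega
  · rintro h _ ⟨t, rfl, ht, hb⟩
    by_contra! htk
    norm_cast at htk
    exact (h t ht (by omega)).not_ge hb

theorem measurable_cusumW [MeasurableSpace Ω] (hmeas : ∀ t, Measurable (W t)) (t : ℕ) :
    Measurable (cusumW W t) := by
  induction t with
  | zero => exact measurable_const
  | succ t ih => exact (ih.add (hmeas t)).max measurable_const

theorem measurableSet_lt_cusumWHit [MeasurableSpace Ω] (hmeas : ∀ t, Measurable (W t)) (k : ℕ) :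
    MeasurableSet {ω | (k : ℕ∞) < cusumWHit W b ω} := by
  simp_rw [lt_cusumWHit_iff, Set.ofPred_forall]
  exact .iInter fun t => .iInter fun _ => .iInter fun _ =>
    measurableSet_lt (measurable_cusumW hmeas t) measurable_const

theorem sum_block_lt_of_lt_cusumWHit {n j k : ℕ} [NeZero n] (hjk : j < k)
    (h : ((k * n : ℕ) : ℕ∞) < cusumWHit W b ω) : ∑ r : Fin n, W (j * n + r) ω < b := by
  have hn := NeZero.one_le (n := n)
  have hblock : ∑ r : Fin n, W (j * n + r) ω = ∑ i ∈ Finset.Ico (j * n) (j * n + n), W i ω := by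
    rw [Fin.sum_univ_eq_sum_range (fun r => W (j * n + r) ω), Finset.sum_Ico_eq_sum_range]
    simp
  rw [hblock]
  refine (sum_Ico_le_cusumW (Nat.le_add_right _ _)).trans_lt (lt_cusumWHit_iff.mp h _ ?_ ?_)
  · omega
  · nlinarith

end Cusum

section Delay

variable {Ω : Type*} [MeasurableSpace Ω] {P : Measure Ω} {W : ℕ → Ω → ℝ}

theorem measure_lt_cusumWHit_le_pow (hmeas : ∀ t, Measurable (W t)) (hindep : iIndepFun W P)
    (hident : ∀ t, IdentDistrib (W t) (W 0) P P) (n : ℕ) [NeZero n] (b : ℝ) (k : ℕ) :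
    P {ω | ((k * n : ℕ) : ℕ∞) < cusumWHit W b ω}
      ≤ P {ω | ∑ i ∈ Finset.range n, W i ω < b} ^ k := by
  have hfirst : {ω | ∑ r : Fin n, W r ω < b} = {ω | ∑ i ∈ Finset.range n, W i ω < b} := by
    ext ω
    rw [Set.mem_ofPred_eq, Fin.sum_univ_eq_sum_range (fun i => W i ω)]
    rfl
  calc P {ω | ((k * n : ℕ) : ℕ∞) < cusumWHit W b ω}
      ≤ P (⋂ j ∈ Finset.range k, {ω | ∑ r : Fin n, W (j * n + r) ω < b}) :=
        measure_mono fun ω hω => Set.mem_biInter fun j hj =>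
          sum_block_lt_of_lt_cusumWHit (Finset.mem_range.mp hj) hω
    _ = ∏ j ∈ Finset.range k, P {ω | ∑ r : Fin n, W (j * n + r) ω < b} :=
        (iIndepFun_sum_block hmeas hindep n).meas_biInter fun j _ =>
          ⟨Set.Iio b, measurableSet_Iio, rfl⟩
    _ = ∏ _j ∈ Finset.range k, P {ω | ∑ i ∈ Finset.range n, W i ω < b} := by
        rw [← hfirst]
        exact Finset.prod_congr rfl fun j _ =>
          (identDistrib_sum_shift hindep hident n (j * n)).measure_mem_eq measurableSet_Iio
    _ = P {ω | ∑ i ∈ Finset.range n, W i ω < b} ^ k := by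
        rw [Finset.prod_const, Finset.card_range]

theorem lintegral_cusumWHit_le (hmeas : ∀ t, Measurable (W t)) (hindep : iIndepFun W P)
    (hident : ∀ t, IdentDistrib (W t) (W 0) P P) (n : ℕ) [NeZero n] (b : ℝ) :
    ∫⁻ ω, (cusumWHit W b ω : ℝ≥0∞) ∂P
      ≤ n * (1 - P {ω | ∑ i ∈ Finset.range n, W i ω < b})⁻¹ := by
  have hanti : Antitone fun m : ℕ => P {ω | (m : ℕ∞) < cusumWHit W b ω} :=
    fun i j hij => measure_mono fun ω (hω : (j : ℕ∞) < _) =>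
      lt_of_le_of_lt (by exact_mod_cast hij) hω
  calc ∫⁻ ω, (cusumWHit W b ω : ℝ≥0∞) ∂P = ∑' m : ℕ, P {ω | (m : ℕ∞) < cusumWHit W b ω} :=
        lintegral_enat_eq_tsum_measure_lt P (measurableSet_lt_cusumWHit hmeas)
    _ ≤ n * ∑' k : ℕ, P {ω | ((k * n : ℕ) : ℕ∞) < cusumWHit W b ω} :=
        ENNReal.tsum_le_mul_tsum_mul_of_antitone hanti n
    _ ≤ n * ∑' k : ℕ, P {ω | ∑ i ∈ Finset.range n, W i ω < b} ^ k := by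
        gcongr with k
        exact measure_lt_cusumWHit_le_pow hmeas hindep hident n b k
    _ = n * (1 - P {ω | ∑ i ∈ Finset.range n, W i ω < b})⁻¹ := by rw [ENNReal.tsum_geometric]

theorem limsup_lintegral_cusumWHit_div_le [IsProbabilityMeasure P]
    (hmeas : ∀ t, Measurable (W t)) (hindep : iIndepFun W P)
    (hident : ∀ t, IdentDistrib (W t) (W 0) P P) (hint : Integrable (W 0) P)
    {a : ℝ} (ha : 0 < a) (haD : a < ∫ ω, W 0 ω ∂P) :
    limsup (fun b : ℝ => (∫⁻ ω, (cusumWHit W b ω : ℝ≥0∞) ∂P) / ENNReal.ofReal b) atTop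
      ≤ ENNReal.ofReal a⁻¹ := by
  set N : ℝ → ℕ := fun b => ⌈a⁻¹ * b⌉₊
  set q : ℕ → ℝ≥0∞ := fun n => P {ω | ∑ i ∈ Finset.range n, W i ω < a * n}
  have hbound : ∀ᶠ b in atTop, (∫⁻ ω, (cusumWHit W b ω : ℝ≥0∞) ∂P) / ENNReal.ofReal b
      ≤ ENNReal.ofReal (N b / b) * (1 - q (N b))⁻¹ := by
    filter_upwards [eventually_gt_atTop 0] with b hb
    have : NeZero (N b) := ⟨(Nat.ceil_pos.mpr (by positivity)).ne'⟩
    have hbN : b ≤ a * N b := by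
      calc b = a * (a⁻¹ * b) := by field_simp
        _ ≤ a * N b := mul_le_mul_of_nonneg_left (Nat.le_ceil _) ha.le
    calc (∫⁻ ω, (cusumWHit W b ω : ℝ≥0∞) ∂P) / ENNReal.ofReal b
        ≤ N b * (1 - q (N b))⁻¹ / ENNReal.ofReal b := by
          gcongr
          refine (lintegral_cusumWHit_le hmeas hindep hident (N b) b).trans ?_
          gcongr
          exact measure_mono fun ω (hω : _ < b) => hω.trans_le hbN
      _ = ENNReal.ofReal (N b / b) * (1 - q (N b))⁻¹ := by
          rw [ENNReal.ofReal_div_of_pos hb, ENNReal.ofReal_natCast, div_eq_mul_inv, div_eq_mul_inv,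
            mul_right_comm]
  have hN : Tendsto (fun b => (N b : ℝ) / b) atTop (𝓝 a⁻¹) :=
    tendsto_nat_ceil_mul_div_atTop (inv_nonneg.mpr ha.le)
  have hq : Tendsto (fun b => q (N b)) atTop (𝓝 0) :=
    (tendsto_measure_sum_lt_mul hmeas hindep hident hint haD).comp
      (tendsto_nat_ceil_atTop.comp (tendsto_id.const_mul_atTop (inv_pos.mpr ha)))
  have hlim : Tendsto (fun b => ENNReal.ofReal (N b / b) * (1 - q (N b))⁻¹) atTop
      (𝓝 (ENNReal.ofReal a⁻¹)) := by
    have h1q : Tendsto (fun b => (1 - q (N b))⁻¹) atTop (𝓝 1) := by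
      simpa using (ENNReal.Tendsto.sub (tendsto_const_nhds (x := (1 : ℝ≥0∞))) hq (by simp)).inv
    simpa using ENNReal.Tendsto.mul (ENNReal.tendsto_ofReal hN) (by simp) h1q (by simp)
  exact (limsup_le_limsup hbound).trans hlim.limsup_eq.le

end Delay

/-- **Asymptotic CuSum detection delay upper bound.** If `W 0, W 1, …` are i.i.d.
integrable with mean `D > 0` (with `W t` playing the role of `W_{t+1}`), then
`limsup_{b → ∞} E[T_b] / b ≤ 1 / D`. -/
theorem cusum_delay_upper_bound
    {Ω : Type*} [MeasurableSpace Ω] (P : Measure Ω) [IsProbabilityMeasure P]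
    (W : ℕ → Ω → ℝ) (hmeas : ∀ t, Measurable (W t))
    (hindep : iIndepFun W P)
    (hident : ∀ t, Measure.map (W t) P = Measure.map (W 0) P)
    (hint : Integrable (W 0) P)
    (D : ℝ) (hD : ∫ ω, W 0 ω ∂P = D) (hDpos : 0 < D) :
    Filter.limsup
        (fun b : ℝ => (∫⁻ ω, (cusumWHit W b ω : ℝ≥0∞) ∂P) / ENNReal.ofReal b)
        Filter.atTop ≤ ENNReal.ofReal (1 / D) := by
  have hidentDistrib (t : ℕ) : IdentDistrib (W t) (W 0) P P :=
    ⟨(hmeas t).aemeasurable, (hmeas 0).aemeasurable, hident t⟩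
  have hlim : Tendsto (fun a : ℝ => ENNReal.ofReal a⁻¹) (𝓝[<] D) (𝓝 (ENNReal.ofReal (1 / D))) := by
    rw [one_div]
    exact ENNReal.tendsto_ofReal ((tendsto_inv₀ hDpos.ne').mono_left nhdsWithin_le_nhds)
  refine ge_of_tendsto hlim ?_
  filter_upwards [Ioo_mem_nhdsLT hDpos] with a ha
  exact limsup_lintegral_cusumWHit_div_le hmeas hindep hidentDistrib hint ha.1 (hD ▸ ha.2)

end QCDStmt
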